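/- arXiv:1401.0779 — 4 statements merged into one kernel-verified Lean document; each statement's English description precedes it below -/
import Mathlib

section
/- Under a point transformation x̃ = φ(x), ũ = ψ(x,u) with φ_x ≠ 0 and ψ_u ≠ 0, the condition ũ″ = 0 (second derivative of ũ with respect to x̃) is equivalent to u″ + a(x,u)u′² + b(x,u)u′ + c(x,u) = 0, where a = ψ_uu/ψ_u, b = (2φ_xψ_xu − ψ_uφ_xx)/(φ_xψ_u), and c = (φ_xψ_xx − ψ_xφ_xx)/(φ_xψ_u). -/
open scoped ContDiff


/-- partial derivative in the first (x) variable -/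
noncomputable def pX (f : ℝ → ℝ → ℝ) : ℝ → ℝ → ℝ := fun x u => deriv (fun t => f t u) x
/-- partial derivative in the second (u) variable -/
noncomputable def pU (f : ℝ → ℝ → ℝ) : ℝ → ℝ → ℝ := fun x u => deriv (fun v => f x v) u

/-- Under x̃ = φ(x), ũ = ψ(x,u) with φ_x ≠ 0 and ψ_u ≠ 0, the condition ũ″ = 0
is equivalent to u″ + a u′² + b u′ + c = 0 with
a = ψ_uu/ψ_u, b = (2φ_xψ_xu − ψ_uφ_xx)/(φ_xψ_u), c = (φ_xψ_xx − ψ_xφ_xx)/(φ_xψ_u). -/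
theorem second_deriv_transform_iff_quadratic
    (φ u : ℝ → ℝ) (ψ : ℝ → ℝ → ℝ)
    (hφ : ContDiff ℝ (⊤ : ℕ∞) φ) (hu : ContDiff ℝ (⊤ : ℕ∞) u)
    (hψ : ContDiff ℝ (⊤ : ℕ∞) (fun p : ℝ × ℝ => ψ p.1 p.2))
    (hφx : ∀ x, deriv φ x ≠ 0)
    (hψu : ∀ x v, pU ψ x v ≠ 0)
    (x : ℝ) :
    (deriv (fun t => deriv (fun s => ψ s (u s)) t / deriv φ t) x / deriv φ x = 0) ↔
    (deriv (deriv u) x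
      + (pU (pU ψ) x (u x) / pU ψ x (u x)) * (deriv u x) ^ 2
      + ((2 * deriv φ x * pX (pU ψ) x (u x) - pU ψ x (u x) * deriv (deriv φ) x)
          / (deriv φ x * pU ψ x (u x))) * deriv u x
      + ((deriv φ x * pX (pX ψ) x (u x) - pX ψ x (u x) * deriv (deriv φ) x)
          / (deriv φ x * pU ψ x (u x))) = 0) := by
  set g : ℝ × ℝ → ℝ := fun p => ψ p.1 p.2 with hgdef
  set D : ℝ × ℝ → (ℝ × ℝ →L[ℝ] ℝ) := fderiv ℝ g with hDdef
  have hgdiff : Differentiable ℝ g := hψ.differentiable (by simp)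
  have hD : ContDiff ℝ (⊤ : ℕ∞) D := hψ.fderiv_right (by simp)
  have hDdiff : Differentiable ℝ D := hD.differentiable (by simp)
  have hu' : ∀ t, HasDerivAt u (deriv u t) t := fun t => (hu.differentiable (by simp) t).hasDerivAt
  have hφ' : ∀ t, HasDerivAt φ (deriv φ t) t := fun t => (hφ.differentiable (by simp) t).hasDerivAt
  have hφ2 : ContDiff ℝ ∞ (deriv φ) :=
    (contDiff_infty_iff_deriv.mp (hφ.of_le (by simp))).2
  have hφ'' : HasDerivAt (deriv φ) (deriv (deriv φ) x) x :=
    (hφ2.differentiable (by simp) x).hasDerivAt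
  have hu2 : ContDiff ℝ ∞ (deriv u) := (contDiff_infty_iff_deriv.mp (hu.of_le (by simp))).2
  have hu'' : HasDerivAt (deriv u) (deriv (deriv u) x) x := (hu2.differentiable (by simp) x).hasDerivAt
  -- first partials
  have hpX : ∀ a b, pX ψ a b = D (a, b) (1, 0) := by
    intro a b
    have h1 : HasDerivAt (fun t : ℝ => (t, b)) ((1 : ℝ), (0 : ℝ)) a :=
      HasDerivAt.prodMk (hasDerivAt_id a) (hasDerivAt_const a b)
    exact ((hgdiff (a, b)).hasFDerivAt.comp_hasDerivAt a h1).deriv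
  have hpU : ∀ a b, pU ψ a b = D (a, b) (0, 1) := by
    intro a b
    have h1 : HasDerivAt (fun w : ℝ => (a, w)) ((0 : ℝ), (1 : ℝ)) b :=
      HasDerivAt.prodMk (hasDerivAt_const b a) (hasDerivAt_id b)
    exact ((hgdiff (a, b)).hasFDerivAt.comp_hasDerivAt b h1).deriv
  -- first derivative of s ↦ ψ s (u s)
  have hF : ∀ t, HasDerivAt (fun s => ψ s (u s)) (D (t, u t) (1, deriv u t)) t := by
    intro t
    have h1 : HasDerivAt (fun s : ℝ => (s, u s)) ((1 : ℝ), deriv u t) t :=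
      HasDerivAt.prodMk (hasDerivAt_id t) (hu' t)
    exact (hgdiff (t, u t)).hasFDerivAt.comp_hasDerivAt t h1
  have hFd : deriv (fun s => ψ s (u s)) = fun t => D (t, u t) (1, deriv u t) :=
    funext fun t => (hF t).deriv
  set E : ℝ × ℝ →L[ℝ] (ℝ × ℝ →L[ℝ] ℝ) := fderiv ℝ D (x, u x) with hEdef
  -- derivative of t ↦ D (t, u t)
  have hH : HasDerivAt (fun t => D (t, u t)) (E (1, deriv u x)) x := by
    have h1 : HasDerivAt (fun s : ℝ => (s, u s)) ((1 : ℝ), deriv u x) x :=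
      HasDerivAt.prodMk (hasDerivAt_id x) (hu' x)
    exact (hDdiff (x, u x)).hasFDerivAt.comp_hasDerivAt x h1
  -- second derivative of s ↦ ψ s (u s) at x
  have hF' : HasDerivAt (fun t => D (t, u t) ((1 : ℝ), deriv u t))
      (E (1, deriv u x) (1, deriv u x) + D (x, u x) (0, deriv (deriv u) x)) x := by
    have h2 : HasDerivAt (fun t : ℝ => ((1 : ℝ), deriv u t)) ((0 : ℝ), deriv (deriv u) x) x :=
      HasDerivAt.prodMk (hasDerivAt_const x (1 : ℝ)) hu''
    exact hH.clm_apply h2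
  -- second partials
  have hHx : HasDerivAt (fun t => D (t, u x)) (E (1, 0)) x := by
    have h1 : HasDerivAt (fun t : ℝ => (t, u x)) ((1 : ℝ), (0 : ℝ)) x :=
      HasDerivAt.prodMk (hasDerivAt_id x) (hasDerivAt_const x (u x))
    exact (hDdiff (x, u x)).hasFDerivAt.comp_hasDerivAt x h1
  have hHu : HasDerivAt (fun w => D (x, w)) (E (0, 1)) (u x) := by
    have h1 : HasDerivAt (fun w : ℝ => (x, w)) ((0 : ℝ), (1 : ℝ)) (u x) :=
      HasDerivAt.prodMk (hasDerivAt_const (u x) x) (hasDerivAt_id (u x))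
    exact (hDdiff (x, u x)).hasFDerivAt.comp_hasDerivAt (u x) h1
  have hQ11 : pX (pX ψ) x (u x) = E (1, 0) (1, 0) := by
    have : HasDerivAt (fun t => D (t, u x) ((1 : ℝ), (0 : ℝ))) (E (1, 0) (1, 0)) x := by
      have := hHx.clm_apply (hasDerivAt_const x ((1 : ℝ), (0 : ℝ)))
      simpa using this
    have heq : (fun t => pX ψ t (u x)) = fun t => D (t, u x) ((1 : ℝ), (0 : ℝ)) :=
      funext fun t => hpX t (u x)
    show deriv (fun t => pX ψ t (u x)) x = _
    rw [heq]; exact this.deriv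
  have hQ12 : pX (pU ψ) x (u x) = E (1, 0) (0, 1) := by
    have : HasDerivAt (fun t => D (t, u x) ((0 : ℝ), (1 : ℝ))) (E (1, 0) (0, 1)) x := by
      have := hHx.clm_apply (hasDerivAt_const x ((0 : ℝ), (1 : ℝ)))
      simpa using this
    have heq : (fun t => pU ψ t (u x)) = fun t => D (t, u x) ((0 : ℝ), (1 : ℝ)) :=
      funext fun t => hpU t (u x)
    show deriv (fun t => pU ψ t (u x)) x = _
    rw [heq]; exact this.deriv
  have hQ22 : pU (pU ψ) x (u x) = E (0, 1) (0, 1) := by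
    have : HasDerivAt (fun w => D (x, w) ((0 : ℝ), (1 : ℝ))) (E (0, 1) (0, 1)) (u x) := by
      have := hHu.clm_apply (hasDerivAt_const (u x) ((0 : ℝ), (1 : ℝ)))
      simpa using this
    have heq : (fun w => pU ψ x w) = fun w => D (x, w) ((0 : ℝ), (1 : ℝ)) :=
      funext fun w => hpU x w
    show deriv (fun w => pU ψ x w) (u x) = _
    rw [heq]; exact this.deriv
  -- symmetry of second derivative
  have hsymm : E (0, 1) (1, 0) = E (1, 0) (0, 1) :=
    (hψ.contDiffAt.isSymmSndFDerivAt (by rw [minSmoothness_of_isRCLikeNormedField]; exact ENat.LEInfty.out)) (0, 1) (1, 0)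
  -- abbreviations
  set A := deriv φ x with hA
  set B := deriv (deriv φ) x with hB
  set U := deriv u x with hU
  set W := deriv (deriv u) x with hW
  have hAne : A ≠ 0 := hφx x
  have hP2ne : D (x, u x) (0, 1) ≠ 0 := by rw [← hpU]; exact hψu x (u x)
  -- bilinear expansion
  have hvec : ((1 : ℝ), U) = ((1 : ℝ), (0 : ℝ)) + U • ((0 : ℝ), (1 : ℝ)) := by
    simp [Prod.ext_iff]
  have hexp : E (1, U) (1, U)
      = E (1, 0) (1, 0) + U * E (1, 0) (0, 1) + U * E (0, 1) (1, 0)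
        + U ^ 2 * E (0, 1) (0, 1) := by
    rw [hvec]
    simp only [map_add, map_smul, ContinuousLinearMap.add_apply, ContinuousLinearMap.smul_apply,
      smul_eq_mul]
    ring
  have hWvec : ((0 : ℝ), W) = W • ((0 : ℝ), (1 : ℝ)) := by simp [Prod.ext_iff]
  have hWapp : D (x, u x) (0, W) = W * D (x, u x) (0, 1) := by
    rw [hWvec, map_smul, smul_eq_mul]
  -- quotient derivative
  set F2 : ℝ := E (1, U) (1, U) + D (x, u x) (0, W) with hF2
  have hnum : HasDerivAt (deriv (fun s => ψ s (u s))) F2 x := by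
    rw [hFd]; exact hF'
  have hquot : HasDerivAt (fun t => deriv (fun s => ψ s (u s)) t / deriv φ t)
      ((F2 * A - deriv (fun s => ψ s (u s)) x * B) / A ^ 2) x :=
    hnum.div hφ'' hAne
  rw [hquot.deriv, (hF x).deriv, hQ11, hQ12, hQ22, hpX, hpU]
  set P1 := D (x, u x) ((1 : ℝ), (0 : ℝ)) with hP1
  set P2 := D (x, u x) ((0 : ℝ), (1 : ℝ)) with hP2
  set Q11 := E (1, 0) ((1 : ℝ), (0 : ℝ))
  set Q12 := E (1, 0) ((0 : ℝ), (1 : ℝ))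
  set Q22 := E (0, 1) ((0 : ℝ), (1 : ℝ))
  have hF2' : F2 = Q11 + 2 * U * Q12 + U ^ 2 * Q22 + W * P2 := by
    rw [hF2, hexp, hsymm, hWapp]; ring
  have hDx : D (x, u x) ((1:ℝ), U) = P1 + U * P2 := by
    rw [hvec, map_add, map_smul, smul_eq_mul]
  rw [hF2', hDx]
  rw [div_div, div_eq_zero_iff, or_iff_left (by positivity)]
  rw [show W + Q22 / P2 * U ^ 2 + (2 * A * Q12 - P2 * B) / (A * P2) * U
        + (A * Q11 - P1 * B) / (A * P2)
      = ((Q11 + 2 * U * Q12 + U ^ 2 * Q22 + W * P2) * A - (P1 + U * P2) * B) / (A * P2) from by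
    field_simp
    ring]
  rw [div_eq_zero_iff, or_iff_left (mul_ne_zero hAne hP2ne)]
end

section
/- If a(x,u) = ψ_uu/ψ_u, b(x,u) = (2φ_xψ_xu − ψ_uφ_xx)/(φ_xψ_u), and c(x,u) = (φ_xψ_xx − ψ_xφ_xx)/(φ_xψ_u) for smooth φ(x) (with φ_x ≠ 0) and ψ(x,u) (with ψ_u ≠ 0), then b_u − 2a_x = 0. -/
/-! Since φ depends on x alone, b = 2 ψ_xu/ψ_u − φ_xx/φ_x, so
b_u = 2 (ψ_u ψ_xuu − ψ_xu ψ_uu)/ψ_u², while 2 a_x = 2 (ψ_u ψ_uux − ψ_uu ψ_ux)/ψ_u².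
The two agree because the mixed partials of ψ_u commute, ψ_u being C² as ψ is C³. -/

open Function

section PartialDerivatives

variable {f : ℝ → ℝ → ℝ} {x v : ℝ}

lemma hasDerivAt_fderiv_apply_one_zero (hf : DifferentiableAt ℝ (uncurry f) (x, v)) :
    HasDerivAt (fun t => f t v) (fderiv ℝ (uncurry f) (x, v) (1, 0)) x :=
  hf.hasFDerivAt.comp_hasDerivAt (f := fun t => (t, v)) x
    ((hasDerivAt_id x).prodMk (hasDerivAt_const x v))

lemma hasDerivAt_fderiv_apply_zero_one (hf : DifferentiableAt ℝ (uncurry f) (x, v)) :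
    HasDerivAt (fun w => f x w) (fderiv ℝ (uncurry f) (x, v) (0, 1)) v :=
  hf.hasFDerivAt.comp_hasDerivAt (f := fun w => (x, w)) v
    ((hasDerivAt_const v x).prodMk (hasDerivAt_id v))

lemma pX_eq_fderiv (hf : DifferentiableAt ℝ (uncurry f) (x, v)) :
    pX f x v = fderiv ℝ (uncurry f) (x, v) (1, 0) :=
  (hasDerivAt_fderiv_apply_one_zero hf).deriv

lemma pU_eq_fderiv (hf : DifferentiableAt ℝ (uncurry f) (x, v)) :
    pU f x v = fderiv ℝ (uncurry f) (x, v) (0, 1) :=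
  (hasDerivAt_fderiv_apply_zero_one hf).deriv

lemma hasDerivAt_pX (hf : DifferentiableAt ℝ (uncurry f) (x, v)) :
    HasDerivAt (fun t => f t v) (pX f x v) x :=
  pX_eq_fderiv hf ▸ hasDerivAt_fderiv_apply_one_zero hf

lemma hasDerivAt_pU (hf : DifferentiableAt ℝ (uncurry f) (x, v)) :
    HasDerivAt (fun w => f x w) (pU f x v) v :=
  pU_eq_fderiv hf ▸ hasDerivAt_fderiv_apply_zero_one hf

lemma uncurry_pX (hf : Differentiable ℝ (uncurry f)) :
    uncurry (pX f) = fun p => fderiv ℝ (uncurry f) p (1, 0) :=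
  funext fun p => pX_eq_fderiv (hf p)

lemma uncurry_pU (hf : Differentiable ℝ (uncurry f)) :
    uncurry (pU f) = fun p => fderiv ℝ (uncurry f) p (0, 1) :=
  funext fun p => pU_eq_fderiv (hf p)

variable {m n : WithTop ℕ∞}

lemma ContDiff.uncurry_pX (hf : ContDiff ℝ n (uncurry f)) (hmn : m + 1 ≤ n) :
    ContDiff ℝ m (uncurry (pX f)) := by
  rw [_root_.uncurry_pX ((hf.of_le (le_add_self.trans hmn)).differentiable one_ne_zero)]
  exact (hf.fderiv_right hmn).clm_apply contDiff_const

lemma ContDiff.uncurry_pU (hf : ContDiff ℝ n (uncurry f)) (hmn : m + 1 ≤ n) :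
    ContDiff ℝ m (uncurry (pU f)) := by
  rw [_root_.uncurry_pU ((hf.of_le (le_add_self.trans hmn)).differentiable one_ne_zero)]
  exact (hf.fderiv_right hmn).clm_apply contDiff_const

lemma pU_pX_comm (hf : ContDiff ℝ 2 (uncurry f)) : pU (pX f) x v = pX (pU f) x v := by
  have hd : Differentiable ℝ (uncurry f) := hf.differentiable two_ne_zero
  have hd' : Differentiable ℝ (fderiv ℝ (uncurry f)) :=
    (hf.fderiv_right (m := 1) (by norm_num)).differentiable one_ne_zero
  rw [pU_eq_fderiv ((hf.uncurry_pX (m := 1) (by norm_num)).differentiable one_ne_zero _),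
    pX_eq_fderiv ((hf.uncurry_pU (m := 1) (by norm_num)).differentiable one_ne_zero _),
    _root_.uncurry_pX hd, _root_.uncurry_pU hd,
    fderiv_clm_apply (hd' _) (differentiableAt_const _),
    fderiv_clm_apply (hd' _) (differentiableAt_const _)]
  simpa using hf.contDiffAt.isSymmSndFDerivAt (by simp) (0, 1) (1, 0)

end PartialDerivatives

theorem first_linearization_condition_general
    (φ : ℝ → ℝ) (ψ a b : ℝ → ℝ → ℝ)
    (hψ : ContDiff ℝ 3 (fun p : ℝ × ℝ => ψ p.1 p.2))
    (hφx : ∀ x, deriv φ x ≠ 0)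
    (hψu : ∀ x v, pU ψ x v ≠ 0)
    (ha : a = fun x v => pU (pU ψ) x v / pU ψ x v)
    (hb : b = fun x v => (2 * deriv φ x * pX (pU ψ) x v - pU ψ x v * deriv (deriv φ) x)
        / (deriv φ x * pU ψ x v)) :
    ∀ x v, pU b x v - 2 * pX a x v = 0 := by
  intro x v
  set G := pU ψ
  have hG : ContDiff ℝ 2 (uncurry G) := ContDiff.uncurry_pU (f := ψ) hψ (by norm_num)
  have hGd : Differentiable ℝ (uncurry G) := hG.differentiable two_ne_zero
  have hGx : Differentiable ℝ (uncurry (pX G)) :=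
    (hG.uncurry_pX (m := 1) (by norm_num)).differentiable one_ne_zero
  have hGu : Differentiable ℝ (uncurry (pU G)) :=
    (hG.uncurry_pU (m := 1) (by norm_num)).differentiable one_ne_zero
  have hb' : b = fun x v => 2 * (pX G x v / G x v) - deriv (deriv φ) x / deriv φ x := by
    rw [hb]
    funext x v
    field_simp [hφx x, hψu x v]
  have hbu : pU b x v = 2 * ((pU (pX G) x v * G x v - pX G x v * pU G x v) / G x v ^ 2) := by
    rw [hb']
    exact ((((hasDerivAt_pU (hGx _)).div (hasDerivAt_pU (hGd _)) (hψu x v)).const_mul 2).sub_const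
      _).deriv
  have hax : pX a x v = (pX (pU G) x v * G x v - pU G x v * pX G x v) / G x v ^ 2 := by
    rw [ha]
    exact ((hasDerivAt_pX (hGu _)).div (hasDerivAt_pX (hGd _)) (hψu x v)).deriv
  rw [hbu, hax, pU_pX_comm hG]
  ring

/-- If a = ψ_uu/ψ_u and b = (2φ_xψ_xu − ψ_uφ_xx)/(φ_xψ_u) for C³ functions φ (with
φ_x ≠ 0) and ψ (with ψ_u ≠ 0), then b_u − 2a_x = 0. -/
theorem first_linearization_condition
    (φ : ℝ → ℝ) (ψ a b c : ℝ → ℝ → ℝ)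
    (hφ : ContDiff ℝ 3 φ)
    (hψ : ContDiff ℝ 3 (fun p : ℝ × ℝ => ψ p.1 p.2))
    (hφx : ∀ x, deriv φ x ≠ 0)
    (hψu : ∀ x v, pU ψ x v ≠ 0)
    (ha : a = fun x v => pU (pU ψ) x v / pU ψ x v)
    (hb : b = fun x v => (2 * deriv φ x * pX (pU ψ) x v - pU ψ x v * deriv (deriv φ) x)
        / (deriv φ x * pU ψ x v))
    (hc : c = fun x v => (deriv φ x * pX (pX ψ) x v - pX ψ x v * deriv (deriv φ) x)
        / (deriv φ x * pU ψ x v)) :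
    ∀ x v, pU b x v - 2 * pX a x v = 0 :=
  first_linearization_condition_general φ ψ a b hψ hφx hψu ha hb
end

section
/- Let Δ be a nowhere-vanishing C² function satisfying Δ_x = 2Δ(φ_xx/φ_x) + Δb₁ and Δ_y = 2Δa₁, with φ : ℝ → ℝ smooth and φ_x ≠ 0. Then equality of mixed partials (Δ_x)_y = (Δ_y)_x yields 2a₁,ₓ − b₁,ᵧ = 0. -/
/-- partial derivative in x -/
noncomputable def pXv (f : ℝ → ℝ → ℝ → ℝ) : ℝ → ℝ → ℝ → ℝ :=
  fun x y z => deriv (fun t => f t y z) x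
/-- partial derivative in y -/
noncomputable def pY (f : ℝ → ℝ → ℝ → ℝ) : ℝ → ℝ → ℝ → ℝ :=
  fun x y z => deriv (fun t => f x t z) y

lemma sliceX {E : Type*} [NormedAddCommGroup E] [NormedSpace ℝ E]
    (F : ℝ × ℝ × ℝ → E) {x y z : ℝ} (hF : DifferentiableAt ℝ F (x, y, z)) :
    HasDerivAt (fun t => F (t, y, z)) (fderiv ℝ F (x, y, z) (1, 0, 0)) x := by
  have hL : HasDerivAt (fun t : ℝ => ((t, y, z) : ℝ × ℝ × ℝ)) (1, 0, 0) x :=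
    HasDerivAt.prodMk (hasDerivAt_id x) (HasDerivAt.prodMk (hasDerivAt_const x y) (hasDerivAt_const x z))
  exact hF.hasFDerivAt.comp_hasDerivAt x hL

lemma sliceY {E : Type*} [NormedAddCommGroup E] [NormedSpace ℝ E]
    (F : ℝ × ℝ × ℝ → E) {x y z : ℝ} (hF : DifferentiableAt ℝ F (x, y, z)) :
    HasDerivAt (fun s => F (x, s, z)) (fderiv ℝ F (x, y, z) (0, 1, 0)) y := by
  have hL : HasDerivAt (fun s : ℝ => ((x, s, z) : ℝ × ℝ × ℝ)) (0, 1, 0) y :=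
    HasDerivAt.prodMk (hasDerivAt_const y x) (HasDerivAt.prodMk (hasDerivAt_id y) (hasDerivAt_const y z))
  exact hF.hasFDerivAt.comp_hasDerivAt y hL

/-- If Δ is nowhere-vanishing, C², with Δ_x = 2Δ(φ_xx/φ_x) + Δb₁ and Δ_y = 2Δa₁,
then equality of mixed partials yields 2a₁,ₓ − b₁,ᵧ = 0. -/
theorem mixed_partials_jacobian_xy
    (Δ a₁ b₁ : ℝ → ℝ → ℝ → ℝ) (φ : ℝ → ℝ)
    (hΔ : ContDiff ℝ 2 (fun p : ℝ × ℝ × ℝ => Δ p.1 p.2.1 p.2.2))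
    (ha₁ : ContDiff ℝ 2 (fun p : ℝ × ℝ × ℝ => a₁ p.1 p.2.1 p.2.2))
    (hb₁ : ContDiff ℝ 2 (fun p : ℝ × ℝ × ℝ => b₁ p.1 p.2.1 p.2.2))
    (hφ : ContDiff ℝ (⊤ : ℕ∞) φ)
    (hφx : ∀ x, deriv φ x ≠ 0)
    (hne : ∀ x y z, Δ x y z ≠ 0)
    (hx : ∀ x y z, pXv Δ x y z =
        2 * Δ x y z * (deriv (deriv φ) x / deriv φ x) + Δ x y z * b₁ x y z)
    (hy : ∀ x y z, pY Δ x y z = 2 * Δ x y z * a₁ x y z) :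
    ∀ x y z, 2 * pXv a₁ x y z - pY b₁ x y z = 0 := by
  intro x y z
  set Fu : ℝ × ℝ × ℝ → ℝ := fun p => Δ p.1 p.2.1 p.2.2 with hFu
  set Au : ℝ × ℝ × ℝ → ℝ := fun p => a₁ p.1 p.2.1 p.2.2 with hAu
  set Bu : ℝ × ℝ × ℝ → ℝ := fun p => b₁ p.1 p.2.1 p.2.2 with hBu
  have hΔd : Differentiable ℝ Fu := hΔ.differentiable (by norm_num)
  have hAd : Differentiable ℝ Au := ha₁.differentiable (by norm_num)
  have hBd : Differentiable ℝ Bu := hb₁.differentiable (by norm_num)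
  have hΔ' : Differentiable ℝ (fderiv ℝ Fu) :=
    (hΔ.fderiv_right (m := 1) (by norm_num)).differentiable (by norm_num)
  -- identification of partials with fderiv applied to basis vectors
  have hpx : ∀ x y z : ℝ, pXv Δ x y z = fderiv ℝ Fu (x, y, z) (1, 0, 0) :=
    fun x y z => (sliceX Fu (hΔd _)).deriv
  have hpy : ∀ x y z : ℝ, pY Δ x y z = fderiv ℝ Fu (x, y, z) (0, 1, 0) :=
    fun x y z => (sliceY Fu (hΔd _)).deriv
  set p : ℝ × ℝ × ℝ := (x, y, z) with hp
  set Dax : ℝ := fderiv ℝ Au p (1, 0, 0) with hDax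
  set Dby : ℝ := fderiv ℝ Bu p (0, 1, 0) with hDby
  set Δx' : ℝ := fderiv ℝ Fu p (1, 0, 0) with hΔx'
  set Δy' : ℝ := fderiv ℝ Fu p (0, 1, 0) with hΔy'
  set ψ : ℝ := deriv (deriv φ) x / deriv φ x with hψ
  -- mixed partial (d/dy of Δ_x)
  have hG : HasDerivAt (fun s => fderiv ℝ Fu (x, s, z))
      (fderiv ℝ (fderiv ℝ Fu) p (0, 1, 0)) y := sliceY (fderiv ℝ Fu) (hΔ' _)
  have hXY : HasDerivAt (fun s => pXv Δ x s z)
      (fderiv ℝ (fderiv ℝ Fu) p (0, 1, 0) (1, 0, 0)) y := by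
    have heq : (fun s => pXv Δ x s z) = fun s => fderiv ℝ Fu (x, s, z) (1, 0, 0) :=
      funext fun s => hpx x s z
    rw [heq]
    simpa using hG.clm_apply (hasDerivAt_const y ((1 : ℝ), (0 : ℝ), (0 : ℝ)))
  -- mixed partial (d/dx of Δ_y)
  have hG2 : HasDerivAt (fun t => fderiv ℝ Fu (t, y, z))
      (fderiv ℝ (fderiv ℝ Fu) p (1, 0, 0)) x := sliceX (fderiv ℝ Fu) (hΔ' _)
  have hYX : HasDerivAt (fun t => pY Δ t y z)
      (fderiv ℝ (fderiv ℝ Fu) p (1, 0, 0) (0, 1, 0)) x := by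
    have heq : (fun t => pY Δ t y z) = fun t => fderiv ℝ Fu (t, y, z) (0, 1, 0) :=
      funext fun t => hpy t y z
    rw [heq]
    simpa using hG2.clm_apply (hasDerivAt_const x ((0 : ℝ), (1 : ℝ), (0 : ℝ)))
  -- derivative of the RHS of hx in y
  have hΔyd : HasDerivAt (fun s => Δ x s z) Δy' y := sliceY Fu (hΔd _)
  have hb1y : HasDerivAt (fun s => b₁ x s z) Dby y := sliceY Bu (hBd _)
  have hRHS1 : HasDerivAt (fun s => 2 * Δ x s z * ψ + Δ x s z * b₁ x s z)
      (2 * Δy' * ψ + (Δy' * b₁ x y z + Δ x y z * Dby)) y :=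
    ((hΔyd.const_mul 2).mul_const ψ).add (hΔyd.mul hb1y)
  have eq1 : fderiv ℝ (fderiv ℝ Fu) p (0, 1, 0) (1, 0, 0)
      = 2 * Δy' * ψ + (Δy' * b₁ x y z + Δ x y z * Dby) := by
    apply hXY.unique
    have heq : (fun s => pXv Δ x s z) = fun s => 2 * Δ x s z * ψ + Δ x s z * b₁ x s z :=
      funext fun s => hx x s z
    rw [heq]; exact hRHS1
  -- derivative of the RHS of hy in x
  have hΔxd : HasDerivAt (fun t => Δ t y z) Δx' x := sliceX Fu (hΔd _)
  have ha1x : HasDerivAt (fun t => a₁ t y z) Dax x := sliceX Au (hAd _)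
  have hRHS2 : HasDerivAt (fun t => 2 * Δ t y z * a₁ t y z)
      (2 * Δx' * a₁ x y z + 2 * Δ x y z * Dax) x := by
    simpa [mul_assoc, mul_add, Pi.mul_def] using (hΔxd.const_mul 2).mul ha1x
  have eq2 : fderiv ℝ (fderiv ℝ Fu) p (1, 0, 0) (0, 1, 0)
      = 2 * Δx' * a₁ x y z + 2 * Δ x y z * Dax := by
    apply hYX.unique
    have heq : (fun t => pY Δ t y z) = fun t => 2 * Δ t y z * a₁ t y z :=
      funext fun t => hy t y z
    rw [heq]; exact hRHS2
  -- symmetry of second derivatives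
  have hsym : fderiv ℝ (fderiv ℝ Fu) p (1, 0, 0) (0, 1, 0)
      = fderiv ℝ (fderiv ℝ Fu) p (0, 1, 0) (1, 0, 0) :=
    (hΔ.contDiffAt.isSymmSndFDerivAt (by norm_num)) _ _
  -- first-order relations
  have hΔxv : Δx' = 2 * Δ x y z * ψ + Δ x y z * b₁ x y z := by
    rw [hΔx', hp, ← hpx x y z]; exact hx x y z
  have hΔyv : Δy' = 2 * Δ x y z * a₁ x y z := by
    rw [hΔy', hp, ← hpy x y z]; exact hy x y z
  have hmain : 2 * Δx' * a₁ x y z + 2 * Δ x y z * Dax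
      = 2 * Δy' * ψ + (Δy' * b₁ x y z + Δ x y z * Dby) := by
    rw [← eq1, ← eq2, hsym]
  rw [hΔxv, hΔyv] at hmain
  have hkey : Δ x y z * (2 * Dax - Dby) = 0 := by linear_combination hmain
  have hz : 2 * Dax - Dby = 0 := by
    rcases mul_eq_zero.mp hkey with h | h
    · exact absurd h (hne x y z)
    · exact h
  have h1 : pXv a₁ x y z = Dax := (sliceX Au (hAd _)).deriv
  have h2 : pY b₁ x y z = Dby := (sliceY Bu (hBd _)).deriv
  rw [h1, h2]; exact hz
end

section
/- The transformation t = x, u = y/(x(y²+z²)), v = −z/(x(y²+z²)) maps solutions of the system y″ − (2y/(y²+z²))y′² − (4z/(y²+z²))y′z′ + (2y/(y²+z²))z′² − (2/x)y′ − 2y/x² = 0, z″ + (2z/(y²+z²))y′² − (4y/(y²+z²))y′z′ − (2z/(y²+z²))z′² − (2/x)z′ − 2z/x² = 0 to solutions of u″ = 0 and v″ = 0; that is, if (y(x), z(x)) solves the nonlinear system on a domain where x ≠ 0 and y² + z² ≠ 0, then d²/dx²[y/(x(y²+z²))] = 0 and d²/dx²[−z/(x(y²+z²))] = 0. -/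
/-! With `w = y + i z` the system is the single complex equation
`w'' = 2 w'² / w + 2 w' / x + 2 w / x²`, which says exactly that `g = x w` satisfies
`g g'' = 2 g'²`. Since `(1/g)'' = (2 g'² - g g'') / g³`, the function `1/g` is then affine,
and `u + i v = 1/(x w)`. -/

open Complex Filter Topology

section SecondDerivative

variable {𝕜 𝕜' F : Type*} [NontriviallyNormedField 𝕜] [NontriviallyNormedField 𝕜']
  [NormedAlgebra 𝕜 𝕜'] [NormedAddCommGroup F] [NormedSpace 𝕜 F]
  {g g' : 𝕜 → 𝕜'} {g'' : 𝕜'} {x : 𝕜}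

theorem eventually_hasDerivAt_inv (hg : ∀ᶠ t in 𝓝 x, HasDerivAt g (g' t) t)
    (hx : g x ≠ 0) :
    ∀ᶠ t in 𝓝 x, HasDerivAt (fun t => (g t)⁻¹) (-g' t / g t ^ 2) t := by
  filter_upwards [hg, hg.self_of_nhds.continuousAt.eventually_ne hx] with t hgt hne
  exact hgt.inv hne

theorem hasDerivAt_neg_div_sq (hg : HasDerivAt g (g' x) x) (hg' : HasDerivAt g' g'' x)
    (hx : g x ≠ 0) :
    HasDerivAt (fun t => -g' t / g t ^ 2) ((2 * g' x ^ 2 - g x * g'') / g x ^ 3) x := by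
  refine (hg'.neg.div (hg.pow 2) (pow_ne_zero 2 hx)).congr_deriv ?_
  simp only [Pi.pow_apply, Pi.neg_apply]
  field_simp
  ring

theorem hasDerivAt_deriv_clm_comp {E : Type*} [NormedAddCommGroup E] [NormedSpace 𝕜 E]
    (L : E →L[𝕜] F) {f f' : 𝕜 → E} {f'' : E}
    (hf : ∀ᶠ t in 𝓝 x, HasDerivAt f (f' t) t) (hf' : HasDerivAt f' f'' x) :
    HasDerivAt (deriv fun t => L (f t)) (L f'') x := by
  have hderiv : deriv (fun t => L (f t)) =ᶠ[𝓝 x] fun t => L (f' t) :=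
    hf.mono fun t ht => (L.hasFDerivAt.comp_hasDerivAt t ht).deriv
  exact (L.hasFDerivAt.comp_hasDerivAt x hf').congr_of_eventuallyEq hderiv

theorem deriv_deriv_clm_inv_eq_zero (L : 𝕜' →L[𝕜] F)
    (hg : ∀ᶠ t in 𝓝 x, HasDerivAt g (g' t) t) (hg' : HasDerivAt g' g'' x) (hx : g x ≠ 0)
    (h : g x * g'' = 2 * g' x ^ 2) :
    deriv (deriv fun t => L (g t)⁻¹) x = 0 := by
  rw [(hasDerivAt_deriv_clm_comp L (eventually_hasDerivAt_inv hg hx)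
    (hasDerivAt_neg_div_sq hg.self_of_nhds hg' hx)).deriv, h, sub_self, zero_div, map_zero]

end SecondDerivative

theorem hasDerivAt_ofReal_add_mul_I {y z : ℝ → ℝ} {y' z' x : ℝ} (hy : HasDerivAt y y' x)
    (hz : HasDerivAt z z' x) :
    HasDerivAt (fun t => (y t + z t * I : ℂ)) (y' + z' * I) x :=
  hy.ofReal_comp.add (hz.ofReal_comp.mul_const I)

theorem hasDerivAt_ofReal_mul {w : ℝ → ℂ} {w' : ℂ} {x : ℝ} (hw : HasDerivAt w w' x) :
    HasDerivAt (fun t : ℝ => (t : ℂ) * w t) (w x + x * w') x := by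
  have h := (hasDerivAt_id' x).smul hw
  simp only [Complex.real_smul, one_smul] at h
  rwa [add_comm] at h

theorem re_inv_ofReal_mul (t a b : ℝ) :
    ((t * (a + b * I) : ℂ)⁻¹).re = a / (t * (a ^ 2 + b ^ 2)) := by
  rw [mul_inv, ← ofReal_inv, re_ofReal_mul, inv_re, normSq_add_mul_I]
  simp only [add_re, ofReal_re, mul_re, I_re, I_im, ofReal_im, mul_zero, mul_one, sub_self,
    add_zero, div_eq_mul_inv, mul_inv_rev]
  ring

theorem im_inv_ofReal_mul (t a b : ℝ) :
    ((t * (a + b * I) : ℂ)⁻¹).im = -b / (t * (a ^ 2 + b ^ 2)) := by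
  rw [mul_inv, ← ofReal_inv, im_ofReal_mul, inv_im, normSq_add_mul_I]
  simp only [add_im, ofReal_im, mul_im, ofReal_re, I_im, I_re, mul_one, mul_zero, add_zero,
    zero_add, div_eq_mul_inv, neg_mul, mul_inv_rev]
  ring

theorem ofReal_mul_ne_zero {t a b : ℝ} (ht : t ≠ 0) (hab : a ^ 2 + b ^ 2 ≠ 0) :
    (t * (a + b * I) : ℂ) ≠ 0 := by
  refine mul_ne_zero (ofReal_ne_zero.mpr ht) fun h => hab ?_
  have ha : a = 0 := by simpa using congrArg re h
  have hb : b = 0 := by simpa using congrArg im h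
  simp [ha, hb]

/-- The system for `w = y + i z`, written as `g g'' = 2 g'²` for `g = x w`. -/
theorem mul_eq_two_mul_sq_of_system {x y z y' z' y'' z'' : ℝ} (hx : x ≠ 0)
    (hS : y ^ 2 + z ^ 2 ≠ 0)
    (h₁ : y'' - (2 * y / (y ^ 2 + z ^ 2)) * y' ^ 2 - (4 * z / (y ^ 2 + z ^ 2)) * y' * z'
      + (2 * y / (y ^ 2 + z ^ 2)) * z' ^ 2 - (2 / x) * y' - 2 * y / x ^ 2 = 0)
    (h₂ : z'' + (2 * z / (y ^ 2 + z ^ 2)) * y' ^ 2 - (4 * y / (y ^ 2 + z ^ 2)) * y' * z'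
      - (2 * z / (y ^ 2 + z ^ 2)) * z' ^ 2 - (2 / x) * z' - 2 * z / x ^ 2 = 0) :
    (x * (y + z * I) : ℂ) * (2 * (y' + z' * I) + x * (y'' + z'' * I))
      = 2 * ((y + z * I) + x * (y' + z' * I)) ^ 2 := by
  apply Complex.ext <;>
    simp only [mul_re, mul_im, add_re, add_im, ofReal_re, ofReal_im, I_re, I_im, re_ofNat,
      im_ofNat, sq, mul_zero, mul_one, sub_self, add_zero, zero_add, zero_mul, sub_zero]
  · linear_combination (norm := skip) x ^ 2 * y * h₁ - x ^ 2 * z * h₂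
    field_simp
    ring
  · linear_combination (norm := skip) x ^ 2 * z * h₁ + x ^ 2 * y * h₂
    field_simp
    ring

/-- The transformation u = y/(x(y²+z²)), v = −z/(x(y²+z²)) maps solutions of the
given nonlinear system to solutions of u″ = 0, v″ = 0. -/
theorem example_one_linearization
    (y z : ℝ → ℝ) (p q : ℝ)
    (hy : Differentiable ℝ y) (hz : Differentiable ℝ z)
    (hy' : Differentiable ℝ (deriv y)) (hz' : Differentiable ℝ (deriv z))
    (hdom : ∀ x ∈ Set.Ioo p q, x ≠ 0 ∧ (y x) ^ 2 + (z x) ^ 2 ≠ 0)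
    (hsys : ∀ x ∈ Set.Ioo p q,
      deriv (deriv y) x
        - (2 * y x / ((y x) ^ 2 + (z x) ^ 2)) * (deriv y x) ^ 2
        - (4 * z x / ((y x) ^ 2 + (z x) ^ 2)) * deriv y x * deriv z x
        + (2 * y x / ((y x) ^ 2 + (z x) ^ 2)) * (deriv z x) ^ 2
        - (2 / x) * deriv y x - 2 * y x / x ^ 2 = 0 ∧
      deriv (deriv z) x
        + (2 * z x / ((y x) ^ 2 + (z x) ^ 2)) * (deriv y x) ^ 2
        - (4 * y x / ((y x) ^ 2 + (z x) ^ 2)) * deriv y x * deriv z x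
        - (2 * z x / ((y x) ^ 2 + (z x) ^ 2)) * (deriv z x) ^ 2
        - (2 / x) * deriv z x - 2 * z x / x ^ 2 = 0) :
    ∀ x ∈ Set.Ioo p q,
      deriv (deriv (fun t => y t / (t * ((y t) ^ 2 + (z t) ^ 2)))) x = 0 ∧
      deriv (deriv (fun t => - z t / (t * ((y t) ^ 2 + (z t) ^ 2)))) x = 0 := by
  intro x hx
  obtain ⟨hx0, hS⟩ := hdom x hx
  have hw (t : ℝ) := hasDerivAt_ofReal_add_mul_I (hy t).hasDerivAt (hz t).hasDerivAt
  have hw' := hasDerivAt_ofReal_add_mul_I (hy' x).hasDerivAt (hz' x).hasDerivAt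
  have hg := Eventually.of_forall (f := 𝓝 x) fun t => hasDerivAt_ofReal_mul (hw t)
  have hg' : HasDerivAt (fun t => (y t + z t * I : ℂ) + t * (deriv y t + deriv z t * I))
      (2 * (deriv y x + deriv z x * I) + x * (deriv (deriv y) x + deriv (deriv z) x * I)) x := by
    refine ((hw x).add (hasDerivAt_ofReal_mul hw')).congr_deriv ?_
    ring
  have hgx := ofReal_mul_ne_zero hx0 hS
  have key := mul_eq_two_mul_sq_of_system hx0 hS (hsys x hx).1 (hsys x hx).2
  have hu : (fun t => y t / (t * ((y t) ^ 2 + (z t) ^ 2)))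
      = fun t => reCLM (t * (y t + z t * I) : ℂ)⁻¹ :=
    funext fun t => (re_inv_ofReal_mul t (y t) (z t)).symm
  have hv : (fun t => - z t / (t * ((y t) ^ 2 + (z t) ^ 2)))
      = fun t => imCLM (t * (y t + z t * I) : ℂ)⁻¹ :=
    funext fun t => (im_inv_ofReal_mul t (y t) (z t)).symm
  rw [hu, hv]
  exact ⟨deriv_deriv_clm_inv_eq_zero reCLM hg hg' hgx key,
    deriv_deriv_clm_inv_eq_zero imCLM hg hg' hgx key⟩
end
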